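/- Let r ≥ 2 and k ≥ 1 be integers, let Δ: ℕ^(r) ↠ [k] be a surjective colouring, and let m ∈ F_Δ. Then there exists an infinite set X ⊆ ℕ with γ(X) = m and a finite subset A ⊆ X such that: (i) for all r-element subsets e₁, e₂ of X, if e₁ ∩ A = e₂ ∩ A then Δ(e₁) = Δ(e₂); and (ii) γ(X \ {v}) < m for every v ∈ A. -/

import Mathlib

/-!
Applying Ramsey's theorem once for each subset of a finite set of colour witnesses shrinks an
infinite set, without losing colours, to one on which the colour of an `r`-set depends only on
its trace on a finite set `A`. Points of `A` whose removal keeps all `m` colours are then deleted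
one at a time; this preserves trace-determination, and when it stops every point of `A` is
essential.
-/

open Finset

/-- The set of colours attained by `Δ` on `r`-element subsets of `X`. -/
def coloursOn {α : Type*} (r : ℕ) (Δ : Finset ℕ → α) (X : Set ℕ) : Set α :=
  Δ '' {e : Finset ℕ | ↑e ⊆ X ∧ e.card = r}

/-- `γ(X)`: the number of colours attained by `Δ` on `r`-element subsets of `X`. -/
noncomputable def gamma {α : Type*} (r : ℕ) (Δ : Finset ℕ → α) (X : Set ℕ) : ℕ :=
  (coloursOn r Δ X).ncard

/-- `F_Δ`: the set of values `γ(X)` over infinite subsets `X ⊆ ℕ`. -/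
def Fdelta {α : Type*} (r : ℕ) (Δ : Finset ℕ → α) : Set ℕ :=
  {m | ∃ X : Set ℕ, X.Infinite ∧ gamma r Δ X = m}

/-- `Δ` is a surjective colouring of `ℕ^(r)`, the `r`-element subsets of `ℕ`,
onto the colour set `[k] = {1, …, k}`. -/
def IsColouring (r k : ℕ) (Δ : Finset ℕ → ℕ) : Prop :=
  (∀ e : Finset ℕ, e.card = r → Δ e ∈ Finset.Icc 1 k) ∧
  ∀ c ∈ Finset.Icc 1 k, ∃ e : Finset ℕ, e.card = r ∧ Δ e = c

section Ramsey

variable {β : Type*}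

theorem colour_eq_of_strictMono_seq {f : Finset ℕ → β} {n : ℕ} {x : ℕ → ℕ} (hx : StrictMono x)
    {U : ℕ → Set ℕ} (hU : Antitone U) (hxU : ∀ i, x i ∈ U i) {col : ℕ → β}
    (hcol : ∀ i (t : Finset ℕ), ↑t ⊆ U (i + 1) → t.card = n → f (insert (x i) t) = col i)
    {c : β} {t : Finset ℕ} (ht : ↑t ⊆ x '' (col ⁻¹' {c})) (htn : t.card = n + 1) :
    f t = c := by
  have hne : t.Nonempty := card_pos.mp (by omega)
  set a := t.min' hne
  have ha : a ∈ t := t.min'_mem hne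
  obtain ⟨i, hi, hxi⟩ := ht ha
  have hrest : ↑(t.erase a) ⊆ U (i + 1) := by
    intro y hy
    obtain ⟨hya, hyt⟩ := mem_erase.mp hy
    obtain ⟨j, -, rfl⟩ := ht hyt
    have hij : i < j := hx.lt_iff_lt.mp (hxi ▸ lt_of_le_of_ne (t.min'_le _ hyt) (Ne.symm hya))
    exact hU hij (hxU j)
  have := hcol i _ hrest (by rw [card_erase_of_mem ha, htn]; rfl)
  rwa [hxi, insert_erase ha, Set.mem_singleton_iff.mp hi] at this

theorem Set.Infinite.exists_infinite_monochromatic [Finite β] (f : Finset ℕ → β) (n : ℕ)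
    {S : Set ℕ} (hS : S.Infinite) :
    ∃ T ⊆ S, T.Infinite ∧ ∃ c, ∀ t : Finset ℕ, ↑t ⊆ T → t.card = n → f t = c := by
  induction n generalizing f S with
  | zero => exact ⟨S, subset_rfl, hS, f ∅, fun t _ ht => by rw [Finset.card_eq_zero.mp ht]⟩
  | succ n ih =>
    choose T hTS hT c hc using fun (S' : Set ℕ) (hS' : S'.Infinite) =>
      ih (fun t => f (insert (sInf S') t)) (hS'.sdiff (Set.finite_Iic (sInf S')))
    -- `U (i + 1)` is obtained from `U i` by removing its minimum `x i` and applying Ramsey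
    -- to the colouring `t ↦ f (insert (x i) t)`.
    let U : ℕ → {S' : Set ℕ // S'.Infinite} :=
      fun i => Nat.rec ⟨S, hS⟩ (fun _ V => ⟨T V.1 V.2, hT V.1 V.2⟩) i
    let x : ℕ → ℕ := fun i => sInf (U i).1
    let col : ℕ → β := fun i => c (U i).1 (U i).2
    have hU_succ : ∀ i, (U (i + 1)).1 ⊆ (U i).1 \ Set.Iic (x i) := fun i => hTS _ _
    have hU : Antitone fun i => (U i).1 :=
      antitone_nat_of_succ_le fun i => (hU_succ i).trans Set.sdiff_subset
    have hxU : ∀ i, x i ∈ (U i).1 := fun i => Nat.sInf_mem (U i).2.nonempty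
    have hx : StrictMono x := strictMono_nat_of_lt_succ fun i => by
      simpa using ((hU_succ i) (hxU (i + 1))).2
    obtain ⟨c₀, hc₀⟩ := Finite.exists_infinite_fiber col
    refine ⟨x '' (col ⁻¹' {c₀}), ?_, (Set.infinite_coe_iff.mp hc₀).image hx.injective.injOn,
      c₀, fun t ht htn => colour_eq_of_strictMono_seq hx hU hxU (fun i => hc _ _) ht htn⟩
    rintro _ ⟨i, -, rfl⟩
    exact hU (Nat.zero_le i) (hxU i)

end Ramsey

section Colours

variable {α : Type*} {r : ℕ} {Δ : Finset ℕ → α}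

theorem coloursOn_mono {X Y : Set ℕ} (h : X ⊆ Y) : coloursOn r Δ X ⊆ coloursOn r Δ Y :=
  Set.image_mono fun _ he => ⟨he.1.trans h, he.2⟩

theorem Set.Infinite.exists_infinite_coloursOn_subsingleton {S : Set ℕ} (hS : S.Infinite)
    (hfin : (coloursOn r Δ S).Finite) :
    ∃ T ⊆ S, T.Infinite ∧ (coloursOn r Δ T).Subsingleton := by
  classical
  have : Finite (coloursOn r Δ S) := hfin.to_subtype
  -- colours never attained on `S` all go to `none`, which leaves only finitely many colours
  obtain ⟨T, hTS, hT, c, hc⟩ := hS.exists_infinite_monochromatic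
    (fun t => if h : Δ t ∈ coloursOn r Δ S then some (⟨Δ t, h⟩ : coloursOn r Δ S) else none) r
  refine ⟨T, hTS, hT, ?_⟩
  rintro _ ⟨t₁, ⟨ht₁, hn₁⟩, rfl⟩ _ ⟨t₂, ⟨ht₂, hn₂⟩, rfl⟩
  have h₁ : Δ t₁ ∈ coloursOn r Δ S := ⟨t₁, ⟨ht₁.trans hTS, hn₁⟩, rfl⟩
  have h₂ : Δ t₂ ∈ coloursOn r Δ S := ⟨t₂, ⟨ht₂.trans hTS, hn₂⟩, rfl⟩
  have := (hc t₁ ht₁ hn₁).trans (hc t₂ ht₂ hn₂).symm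
  simpa only [dif_pos h₁, dif_pos h₂, Option.some_inj, Subtype.mk.injEq] using this

theorem Set.Infinite.exists_infinite_forall_coloursOn_subsingleton {ι : Type*} (I : Finset ι)
    (n : ι → ℕ) (Γ : ι → Finset ℕ → α) {S : Set ℕ} (hS : S.Infinite)
    (hfin : ∀ i ∈ I, (coloursOn (n i) (Γ i) S).Finite) :
    ∃ T ⊆ S, T.Infinite ∧ ∀ i ∈ I, (coloursOn (n i) (Γ i) T).Subsingleton := by
  classical
  induction I using Finset.induction_on generalizing S with
  | empty => exact ⟨S, subset_rfl, hS, by simp⟩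
  | insert a I _ ih =>
    obtain ⟨T₁, hT₁S, hT₁, hI⟩ := ih hS fun i hi => hfin i (Finset.mem_insert_of_mem hi)
    obtain ⟨T₂, hT₂T₁, hT₂, ha⟩ := hT₁.exists_infinite_coloursOn_subsingleton
      ((hfin a (Finset.mem_insert_self a I)).subset (coloursOn_mono hT₁S))
    refine ⟨T₂, hT₂T₁.trans hT₁S, hT₂, fun i hi => ?_⟩
    rcases Finset.mem_insert.mp hi with rfl | hi
    · exact ha
    · exact (hI i hi).anti (coloursOn_mono hT₂T₁)

theorem coloursOn_union_subset {s : Finset ℕ} {S Y : Set ℕ} (hsY : ↑s ⊆ Y) (hSY : S ⊆ Y)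
    (hsS : Disjoint (↑s) S) (hs : s.card ≤ r) :
    coloursOn (r - s.card) (fun t => Δ (s ∪ t)) S ⊆ coloursOn r Δ Y := by
  rintro _ ⟨t, ⟨htS, htn⟩, rfl⟩
  refine ⟨s ∪ t, ⟨?_, ?_⟩, rfl⟩
  · rw [coe_union]
    exact Set.union_subset hsY (htS.trans hSY)
  · rw [card_union_of_disjoint (disjoint_coe.mp (hsS.mono_right htS)), htn]
    omega

theorem mem_coloursOn_inter_union {e W : Finset ℕ} {T : Set ℕ} (he : ↑e ⊆ ↑W ∪ T)
    (hn : e.card = r) : Δ e ∈ coloursOn (r - (e ∩ W).card) (fun t => Δ (e ∩ W ∪ t)) T := by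
  refine ⟨e \ W, ⟨fun x hx => ?_, ?_⟩, by dsimp only; rw [union_comm, sdiff_union_inter]⟩
  · obtain ⟨hxe, hxW⟩ := mem_sdiff.mp hx
    exact (he hxe).resolve_left hxW
  · have := card_inter_add_card_sdiff e W
    omega

def IsTraceDetermined (r : ℕ) (Δ : Finset ℕ → α) (X : Set ℕ) (A : Finset ℕ) : Prop :=
  ∀ e₁ e₂ : Finset ℕ, ↑e₁ ⊆ X → e₁.card = r → ↑e₂ ⊆ X → e₂.card = r →
    e₁ ∩ A = e₂ ∩ A → Δ e₁ = Δ e₂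

theorem IsTraceDetermined.sdiff_singleton {X : Set ℕ} {A : Finset ℕ}
    (hA : IsTraceDetermined r Δ X A) (v : ℕ) :
    IsTraceDetermined r Δ (X \ {v}) (A.erase v) := by
  have htrace : ∀ e : Finset ℕ, ↑e ⊆ X \ {v} → e ∩ A.erase v = e ∩ A := fun e he => by
    rw [inter_erase, erase_eq_of_notMem fun hv => (he (mem_inter.mp hv).1).2 rfl]
  intro e₁ e₂ h₁ hn₁ h₂ hn₂ htr
  exact hA e₁ e₂ (h₁.trans Set.sdiff_subset) hn₁ (h₂.trans Set.sdiff_subset) hn₂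
    (by rw [← htrace e₁ h₁, ← htrace e₂ h₂, htr])

/-- Keep a finite set `W` of witnesses for all colours of `Y`, and shrink the rest of `Y`
so that, for each `s ⊆ W`, all `r`-sets with trace `s` on `W` get the same colour. -/
theorem exists_infinite_isTraceDetermined {Y : Set ℕ} (hY : Y.Infinite)
    (hfin : (coloursOn r Δ Y).Finite) :
    ∃ X ⊆ Y, X.Infinite ∧ coloursOn r Δ X = coloursOn r Δ Y ∧
      ∃ A : Finset ℕ, ↑A ⊆ X ∧ IsTraceDetermined r Δ X A := by
  classical
  obtain ⟨E, hEY, hE, hEcol⟩ : ∃ E ⊆ {e : Finset ℕ | ↑e ⊆ Y ∧ e.card = r},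
      E.Finite ∧ coloursOn r Δ Y = Δ '' E :=
    Set.exists_subset_image_finite_and.mp ⟨_, subset_rfl, hfin, rfl⟩
  set W := hE.toFinset.biUnion id
  have hEW : ∀ e ∈ E, e ⊆ W := fun e he => subset_biUnion_of_mem id (hE.mem_toFinset.mpr he)
  have hWY : ↑W ⊆ Y := by
    intro x hx
    obtain ⟨e, he, hxe⟩ := mem_biUnion.mp hx
    exact (hEY (hE.mem_toFinset.mp he)).1 hxe
  have hfinW : ∀ s ∈ W.powerset.filter (·.card ≤ r),
      (coloursOn (r - s.card) (fun t => Δ (s ∪ t)) (Y \ ↑W)).Finite := by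
    intro s hs
    obtain ⟨hsW, hsr⟩ := mem_filter.mp hs
    replace hsW : (↑s : Set ℕ) ⊆ W := coe_subset.mpr (mem_powerset.mp hsW)
    exact hfin.subset <| coloursOn_union_subset (hsW.trans hWY) Set.sdiff_subset
      (Set.disjoint_sdiff_right.mono_left hsW) hsr
  obtain ⟨T, hTY, hT, hhom⟩ :=
    (hY.sdiff W.finite_toSet).exists_infinite_forall_coloursOn_subsingleton _
      (fun s => r - s.card) (fun s t => Δ (s ∪ t)) hfinW
  have hXY : ↑W ∪ T ⊆ Y := Set.union_subset hWY (hTY.trans Set.sdiff_subset)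
  refine ⟨↑W ∪ T, hXY, hT.mono Set.subset_union_right, (coloursOn_mono hXY).antisymm ?_,
    W, Set.subset_union_left, ?_⟩
  · rw [hEcol]
    rintro _ ⟨e, he, rfl⟩
    exact ⟨e, ⟨(coe_subset.mpr (hEW e he)).trans Set.subset_union_left, (hEY he).2⟩, rfl⟩
  · intro e₁ e₂ h₁ hn₁ h₂ hn₂ htr
    have hmem : e₁ ∩ W ∈ W.powerset.filter (·.card ≤ r) :=
      mem_filter.mpr ⟨mem_powerset.mpr inter_subset_right, hn₁ ▸ card_le_card inter_subset_left⟩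
    exact hhom _ hmem (mem_coloursOn_inter_union h₁ hn₁) (htr ▸ mem_coloursOn_inter_union h₂ hn₂)

theorem IsTraceDetermined.exists_forall_gamma_sdiff_lt {X : Set ℕ} {A : Finset ℕ}
    (hA : IsTraceDetermined r Δ X A) (hX : X.Infinite) (hAX : ↑A ⊆ X)
    (hfin : (coloursOn r Δ X).Finite) :
    ∃ X' : Set ℕ, X'.Infinite ∧ gamma r Δ X' = gamma r Δ X ∧
      ∃ A' : Finset ℕ, ↑A' ⊆ X' ∧ IsTraceDetermined r Δ X' A' ∧
        ∀ v ∈ A', gamma r Δ (X' \ {v}) < gamma r Δ X' := by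
  induction A using Finset.strongInduction generalizing X with
  | H A ih =>
    by_cases hmin : ∀ v ∈ A, gamma r Δ (X \ {v}) < gamma r Δ X
    · exact ⟨X, hX, rfl, A, hAX, hA, hmin⟩
    push Not at hmin
    obtain ⟨v, hvA, hge⟩ := hmin
    have hle : gamma r Δ (X \ {v}) ≤ gamma r Δ X :=
      Set.ncard_le_ncard (coloursOn_mono Set.sdiff_subset) hfin
    obtain ⟨X', hX', hγ, rest⟩ := ih (A.erase v) (erase_ssubset hvA) (hA.sdiff_singleton v)
      (hX.sdiff (Set.finite_singleton v))
      (by rw [coe_erase]; exact Set.sdiff_subset_sdiff_left hAX)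
      (hfin.subset (coloursOn_mono Set.sdiff_subset))
    exact ⟨X', hX', hγ.trans (le_antisymm hle hge), rest⟩

end Colours

theorem claim_A_general (r k : ℕ) (Δ : Finset ℕ → ℕ)
    (hΔ : IsColouring r k Δ) (m : ℕ) (hm : m ∈ Fdelta r Δ) :
    ∃ X : Set ℕ, X.Infinite ∧ gamma r Δ X = m ∧
      ∃ A : Finset ℕ, ↑A ⊆ X ∧
        (∀ e₁ e₂ : Finset ℕ, ↑e₁ ⊆ X → e₁.card = r → ↑e₂ ⊆ X → e₂.card = r →
          e₁ ∩ A = e₂ ∩ A → Δ e₁ = Δ e₂) ∧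
        ∀ v ∈ A, gamma r Δ (X \ {v}) < m := by
  obtain ⟨Y, hY, rfl⟩ := hm
  have hfin : (coloursOn r Δ Y).Finite := (Finset.Icc 1 k).finite_toSet.subset <| by
    rintro _ ⟨e, ⟨-, he⟩, rfl⟩
    exact hΔ.1 e he
  obtain ⟨X, -, hX, hcol, A, hAX, hA⟩ := exists_infinite_isTraceDetermined hY hfin
  have hγ : gamma r Δ X = gamma r Δ Y := congrArg Set.ncard hcol
  obtain ⟨X', hX', hγ', A', hA'X', hA', hlt⟩ :=
    hA.exists_forall_gamma_sdiff_lt hX hAX (hcol ▸ hfin)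
  exact ⟨X', hX', hγ'.trans hγ, A', hA'X', hA', hγ'.trans hγ ▸ hlt⟩

/-- **Claim A.** For `m ∈ F_Δ` there is an infinite `m`-coloured set `X ⊆ ℕ` with a finite
subset `A ⊆ X` such that (i) the colour of every `r`-subset of `X` is determined by its
intersection with `A`, and (ii) `γ(X \ {v}) < m` for all `v ∈ A`. -/
theorem claim_A (r k : ℕ) (hr : 2 ≤ r) (hk : 1 ≤ k) (Δ : Finset ℕ → ℕ)
    (hΔ : IsColouring r k Δ) (m : ℕ) (hm : m ∈ Fdelta r Δ) :
    ∃ X : Set ℕ, X.Infinite ∧ gamma r Δ X = m ∧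
      ∃ A : Finset ℕ, ↑A ⊆ X ∧
        (∀ e₁ e₂ : Finset ℕ, ↑e₁ ⊆ X → e₁.card = r → ↑e₂ ⊆ X → e₂.card = r →
          e₁ ∩ A = e₂ ∩ A → Δ e₁ = Δ e₂) ∧
        ∀ v ∈ A, gamma r Δ (X \ {v}) < m :=
  claim_A_general r k Δ hΔ m hm
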